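/- Let n ≥ 1 and j ≥ 1 be integers, let a, b ∈ M_n(ℂ) satisfy ab = ba, and let u, Q_0, …, Q_j : ℝ² → M_n(ℂ) be smooth maps with Q_0 ≡ b satisfying ∂_x Q_i + [u, Q_i] = [Q_{i+1}, a] for 0 ≤ i ≤ j−1 and the flow equation ∂_t u = ∂_x Q_j + [u, Q_j]. Suppose g : ℝ² → GL(n,ℂ) is smooth with ∂_x g = g u and ∂_t g = g Q_j. Then for every λ ∈ ℂ the gauge-transformed connection 1-form λ (g a g⁻¹) dx + (Σ_{i=0}^{j−1} g Q_i g⁻¹ λ^{j−i}) dt is flat, i.e. ∂_t(λ g a g⁻¹) − ∂_x(Σ_{i=0}^{j−1} g Q_i g⁻¹ λ^{j−i}) = [λ g a g⁻¹, Σ_{i=0}^{j−1} g Q_i g⁻¹ λ^{j−i}] for all (x,t). -/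

import Mathlib

open Matrix Finset
open scoped ContDiff

attribute [local instance] Matrix.frobeniusNormedAddCommGroup Matrix.frobeniusNormedSpace
attribute [local instance] Matrix.frobeniusNormedRing Matrix.frobeniusNormedAlgebra

private lemma aux_inv {n : ℕ} {f : ℝ → Matrix (Fin n) (Fin n) ℂ} {f' : Matrix (Fin n) (Fin n) ℂ}
    {x : ℝ} (hf : HasDerivAt f f' x) (hx : IsUnit (f x)) :
    HasDerivAt (fun s => (f s)⁻¹) (-((f x)⁻¹ * f' * (f x)⁻¹)) x := by
  have hcoe : ((hx.unit⁻¹ : (Matrix (Fin n) (Fin n) ℂ)ˣ) : Matrix (Fin n) (Fin n) ℂ) = (f x)⁻¹ := by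
    rw [Matrix.coe_units_inv, hx.unit_spec]
  have h1 : HasFDerivAt Ring.inverse
      (-(ContinuousLinearMap.mulLeftRight ℝ _ ((f x)⁻¹) ((f x)⁻¹))) (f x) := by
    have := hasFDerivAt_ringInverse (𝕜 := ℝ) hx.unit
    rw [hx.unit_spec, hcoe] at this
    exact this
  have h2 := h1.comp_hasDerivAt x hf
  have h4 : Ring.inverse ∘ f = fun s => (f s)⁻¹ := by
    funext s; simp [Matrix.nonsing_inv_eq_ringInverse]
  rw [h4] at h2
  simp at h2
  exact h2

private lemma aux_sum {M : Type*} [AddCommGroup M] [Module ℂ M] (lam : ℂ) (C : ℕ → M)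
    (h0 : C 0 = 0) :
    ∀ j : ℕ, lam • C j - ∑ i ∈ range j, lam ^ (j - i) • C (i + 1)
      = -∑ i ∈ range j, lam ^ (j - i + 1) • C i := by
  intro j
  induction j with
  | zero => simp [h0]
  | succ j ih =>
    rw [Finset.sum_range_succ, Finset.sum_range_succ]
    have e1 : ∀ i ∈ range j, lam ^ (j + 1 - i) • C (i + 1) = lam • (lam ^ (j - i) • C (i + 1)) := by
      intro i hi
      rw [smul_smul, ← pow_succ']
      congr 2
      have := Finset.mem_range.mp hi
      omega
    rw [Finset.sum_congr rfl e1, ← Finset.smul_sum]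
    have ih' : ∑ i ∈ range j, lam ^ (j - i) • C (i + 1)
        = lam • C j + ∑ i ∈ range j, lam ^ (j - i + 1) • C i := by
      have h2 : (∑ i ∈ range j, lam ^ (j - i) • C (i + 1))
          = lam • C j - (lam • C j - ∑ i ∈ range j, lam ^ (j - i) • C (i + 1)) := by abel
      rw [h2, ih]; abel
    rw [ih', smul_add, Finset.smul_sum]
    have e2 : ∀ i ∈ range j, lam • (lam ^ (j - i + 1) • C i) = lam ^ (j + 1 - i + 1) • C i := by
      intro i hi
      rw [smul_smul, ← pow_succ']
      congr 2
      have := Finset.mem_range.mp hi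
      omega
    rw [Finset.sum_congr rfl e2]
    have h5 : j + 1 - j = 1 := by omega
    rw [h5, pow_one]
    have h7 : lam ^ (1 + 1) • C j = lam • (lam • C j) := by
      rw [smul_smul, pow_succ, pow_one]
    rw [h7]
    abel

/-- Let `n, j ≥ 1`, `a b ∈ M_n(ℂ)` with `ab = ba`, and `u, Q 0, …, Q j : ℝ² → M_n(ℂ)` smooth
with `Q 0 ≡ b`, satisfying the recursion `∂ₓ Q i + [u, Q i] = [Q (i+1), a]` (`0 ≤ i ≤ j-1`)
and the flow equation `∂ₜ u = ∂ₓ Q j + [u, Q j]`.  If `g : ℝ² → GL(n,ℂ)` is smooth with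
`∂ₓ g = g u` and `∂ₜ g = g Q j`, then for every `λ ∈ ℂ` the gauge-transformed 1-form
`λ (g a g⁻¹) dx + (Σ_{i=0}^{j-1} g (Q i) g⁻¹ λ^{j-i}) dt` is flat. -/
theorem stmt_1 (n j : ℕ) (hn : 1 ≤ n) (hj : 1 ≤ j)
    (a b : Matrix (Fin n) (Fin n) ℂ) (hab : a * b = b * a)
    (u : ℝ → ℝ → Matrix (Fin n) (Fin n) ℂ)
    (Q : ℕ → ℝ → ℝ → Matrix (Fin n) (Fin n) ℂ)
    (hu : ContDiff ℝ ∞ (Function.uncurry u))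
    (hQ : ∀ i ≤ j, ContDiff ℝ ∞ (Function.uncurry (Q i)))
    (hQ0 : ∀ x t, Q 0 x t = b)
    (hrec : ∀ i < j, ∀ x t : ℝ,
      deriv (fun s => Q i s t) x + (u x t * Q i x t - Q i x t * u x t)
        = Q (i + 1) x t * a - a * Q (i + 1) x t)
    (hflow : ∀ x t : ℝ,
      deriv (fun s => u x s) t
        = deriv (fun s => Q j s t) x + (u x t * Q j x t - Q j x t * u x t))
    (g : ℝ → ℝ → Matrix (Fin n) (Fin n) ℂ)
    (hg : ContDiff ℝ ∞ (Function.uncurry g))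
    (hginv : ∀ x t : ℝ, IsUnit (g x t))
    (hgx : ∀ x t : ℝ, deriv (fun s => g s t) x = g x t * u x t)
    (hgt : ∀ x t : ℝ, deriv (fun s => g x s) t = g x t * Q j x t) :
    ∀ (lam : ℂ) (x t : ℝ),
      deriv (fun s => lam • (g x s * a * (g x s)⁻¹)) t
        - deriv (fun s =>
            ∑ i ∈ range j, lam ^ (j - i) • (g s t * Q i s t * (g s t)⁻¹)) x
      = (lam • (g x t * a * (g x t)⁻¹))
            * (∑ i ∈ range j, lam ^ (j - i) • (g x t * Q i x t * (g x t)⁻¹))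
        - (∑ i ∈ range j, lam ^ (j - i) • (g x t * Q i x t * (g x t)⁻¹))
            * (lam • (g x t * a * (g x t)⁻¹)) := by
  intro lam x t
  have h1le : (1 : WithTop ℕ∞) ≤ ∞ := by exact_mod_cast le_top
  have sliceX : ∀ (F : ℝ → ℝ → Matrix (Fin n) (Fin n) ℂ), ContDiff ℝ ∞ (Function.uncurry F) →
      ∀ (x t : ℝ), DifferentiableAt ℝ (fun s => F s t) x := by
    intro F hF x t
    exact (((hF.differentiable (by simp)).comp
      (differentiable_id.prodMk (differentiable_const t)))).differentiableAt
  have sliceT : ∀ (F : ℝ → ℝ → Matrix (Fin n) (Fin n) ℂ), ContDiff ℝ ∞ (Function.uncurry F) →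
      ∀ (x t : ℝ), DifferentiableAt ℝ (fun s => F x s) t := by
    intro F hF x t
    exact (((hF.differentiable (by simp)).comp
      ((differentiable_const x).prodMk differentiable_id))).differentiableAt
  have hdet : IsUnit (g x t).det := (Matrix.isUnit_iff_isUnit_det _).mp (hginv x t)
  -- t-direction
  have hgt' : HasDerivAt (fun s => g x s) (g x t * Q j x t) t := by
    have := (sliceT g hg x t).hasDerivAt
    rw [← hgt x t]
    exact this
  have hginvt : HasDerivAt (fun s => (g x s)⁻¹)
      (-((g x t)⁻¹ * (g x t * Q j x t) * (g x t)⁻¹)) t := aux_inv hgt' (hginv x t)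
  have hA : HasDerivAt (fun s => g x s * a * (g x s)⁻¹)
      (g x t * (Q j x t * a - a * Q j x t) * (g x t)⁻¹) t := by
    have h : HasDerivAt (fun s => g x s * a * (g x s)⁻¹) _ t := (hgt'.fun_mul (hasDerivAt_const t a)).fun_mul hginvt
    convert h using 1
    rw [Matrix.nonsing_inv_mul_cancel_left _ _ hdet]
    noncomm_ring
  -- x-direction
  have hgx' : HasDerivAt (fun s => g s t) (g x t * u x t) x := by
    have := (sliceX g hg x t).hasDerivAt
    rw [← hgx x t]
    exact this
  have hginvx : HasDerivAt (fun s => (g s t)⁻¹)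
      (-((g x t)⁻¹ * (g x t * u x t) * (g x t)⁻¹)) x := aux_inv hgx' (hginv x t)
  have hterm : ∀ i ∈ range j,
      HasDerivAt (fun s => lam ^ (j - i) • (g s t * Q i s t * (g s t)⁻¹))
        (lam ^ (j - i) • (g x t * (Q (i + 1) x t * a - a * Q (i + 1) x t) * (g x t)⁻¹)) x := by
    intro i hi
    have hij : i < j := Finset.mem_range.mp hi
    have hQx : HasDerivAt (fun s => Q i s t) (deriv (fun s => Q i s t) x) x :=
      (sliceX (Q i) (hQ i hij.le) x t).hasDerivAt
    have h : HasDerivAt (fun s => lam ^ (j - i) • (g s t * Q i s t * (g s t)⁻¹)) _ x :=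
      ((hgx'.fun_mul hQx).fun_mul hginvx).const_smul (lam ^ (j - i))
    convert h using 2
    rw [Matrix.nonsing_inv_mul_cancel_left _ _ hdet, ← hrec i hij x t]
    noncomm_ring
  have hB : HasDerivAt
      (fun s => ∑ i ∈ range j, lam ^ (j - i) • (g s t * Q i s t * (g s t)⁻¹))
      (∑ i ∈ range j,
        lam ^ (j - i) • (g x t * (Q (i + 1) x t * a - a * Q (i + 1) x t) * (g x t)⁻¹)) x :=
    HasDerivAt.fun_sum hterm
  rw [show deriv (fun s => lam • (g x s * a * (g x s)⁻¹)) t = _ from (hA.const_smul lam).deriv,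
    show deriv (fun s => ∑ i ∈ range j, lam ^ (j - i) • (g s t * Q i s t * (g s t)⁻¹)) x = _ from hB.deriv]
  have hC0 : (fun i => g x t * (Q i x t * a - a * Q i x t) * (g x t)⁻¹) 0 = 0 := by
    simp only [hQ0, ← hab, sub_self, Matrix.mul_zero, Matrix.zero_mul]
  have main := aux_sum lam (fun i => g x t * (Q i x t * a - a * Q i x t) * (g x t)⁻¹) hC0 j
  have hmid : ∀ X Y : Matrix (Fin n) (Fin n) ℂ,
      (g x t * X * (g x t)⁻¹) * (g x t * Y * (g x t)⁻¹) = g x t * (X * Y) * (g x t)⁻¹ := by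
    intro X Y
    calc (g x t * X * (g x t)⁻¹) * (g x t * Y * (g x t)⁻¹)
        = g x t * X * ((g x t)⁻¹ * (g x t * (Y * (g x t)⁻¹))) := by noncomm_ring
      _ = g x t * (X * Y) * (g x t)⁻¹ := by
          rw [Matrix.nonsing_inv_mul_cancel_left _ _ hdet]; noncomm_ring
  have hRHS : (lam • (g x t * a * (g x t)⁻¹))
        * (∑ i ∈ range j, lam ^ (j - i) • (g x t * Q i x t * (g x t)⁻¹))
      - (∑ i ∈ range j, lam ^ (j - i) • (g x t * Q i x t * (g x t)⁻¹))
        * (lam • (g x t * a * (g x t)⁻¹))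
      = -∑ i ∈ range j,
          lam ^ (j - i + 1) • (g x t * (Q i x t * a - a * Q i x t) * (g x t)⁻¹) := by
    rw [Finset.mul_sum, Finset.sum_mul, ← Finset.sum_sub_distrib, ← Finset.sum_neg_distrib]
    apply Finset.sum_congr rfl
    intro i hi
    rw [smul_mul_smul_comm, smul_mul_smul_comm, hmid, hmid]
    rw [show lam * lam ^ (j - i) = lam ^ (j - i + 1) by ring,
        show lam ^ (j - i) * lam = lam ^ (j - i + 1) by ring]
    rw [← smul_sub, ← smul_neg]
    congr 1
    noncomm_ring
  exact main.trans hRHS.symm
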